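/- Let K be a coronoid with complement decomposition K^∁ = B_∞ ⊔ B_1 ⊔ ... ⊔ B_d where B_∞ is the unique infinite component. Then each finite component B_i (1 ≤ i ≤ d) is a benzenoid, i.e., B_i is finite, connected, and its complement B_i^∁ is connected; moreover B_∞^∁ is also a benzenoid. -/

import Mathlib

/-- Hexagons of the infinite hexagonal grid, indexed by integer pairs. -/
abbrev Hexa := ℤ × ℤ

/-- Two hexagons of the grid are adjacent (share an edge). -/
def HexAdj (a b : Hexa) : Prop :=
  (b.1 - a.1, b.2 - a.2) ∈
    ({(1,0), (-1,0), (0,1), (1,1), (0,-1), (-1,-1)} : Set (ℤ × ℤ))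

/-- `a` and `b` are joined by a path of pairwise-adjacent hexagons all lying in `K`. -/
def ReachIn (K : Set Hexa) (a b : Hexa) : Prop :=
  a ∈ K ∧ b ∈ K ∧
    Relation.ReflTransGen (fun x y => HexAdj x y ∧ x ∈ K ∧ y ∈ K) a b

/-- A hexagonal system is connected if any two of its hexagons are joined inside it. -/
def IsConnectedSys (K : Set Hexa) : Prop := ∀ a ∈ K, ∀ b ∈ K, ReachIn K a b

/-- `C` is a connected component of the hexagonal system `K`. -/
def IsComponent (K C : Set Hexa) : Prop := ∃ a ∈ K, C = {b | ReachIn K a b}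

/-- A coronoid is a finite connected (nonempty) hexagonal system. -/
def IsCoronoid (K : Set Hexa) : Prop := K.Finite ∧ K.Nonempty ∧ IsConnectedSys K

/-- A benzenoid is a coronoid whose complement is connected. -/
def IsBenzenoid (K : Set Hexa) : Prop := IsCoronoid K ∧ IsConnectedSys Kᶜ

/-!
Let `C` be a component of `Kᶜ`. Along any path of the plane that starts in `Cᶜ`, one stays in
`Cᶜ` at least until the first hexagon of `K`: stepping into `C` from a hexagon of `Kᶜ` would put
that hexagon in `C` too. Hence any two hexagons of `Cᶜ` are joined inside `Cᶜ`, either directly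
or through the connected system `K ⊆ Cᶜ`; so `Cᶜ` is connected whenever `K` is. For finiteness:
outside a box containing `K` all hexagons are joined to each other, so they lie in a single
component; if `C` is infinite it meets the outside of the box, and then `Cᶜ` lies inside the box.
-/

theorem HexAdj.symm {a b : Hexa} (h : HexAdj a b) : HexAdj b a := by
  simp only [HexAdj, Set.mem_insert_iff, Set.mem_singleton_iff, Prod.mk.injEq] at h ⊢
  omega

namespace ReachIn

variable {L L' : Set Hexa} {a b c : Hexa}

theorem refl (ha : a ∈ L) : ReachIn L a a := ⟨ha, ha, .refl⟩

theorem of_hexAdj (h : HexAdj a b) (ha : a ∈ L) (hb : b ∈ L) : ReachIn L a b :=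
  ⟨ha, hb, .single ⟨h, ha, hb⟩⟩

theorem trans (hab : ReachIn L a b) (hbc : ReachIn L b c) : ReachIn L a c :=
  ⟨hab.1, hbc.2.1, hab.2.2.trans hbc.2.2⟩

theorem symm (h : ReachIn L a b) : ReachIn L b a := by
  obtain ⟨ha, hb, hpath⟩ := h
  induction hpath with
  | refl => exact refl ha
  | tail _ hstep ih => exact (of_hexAdj hstep.1.symm hstep.2.2 hstep.2.1).trans (ih hstep.2.1)

theorem mono (hLL' : L ⊆ L') (h : ReachIn L a b) : ReachIn L' a b :=
  ⟨hLL' h.1, hLL' h.2.1,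
    Relation.ReflTransGen.mono (fun _ _ hs => ⟨hs.1, hLL' hs.2.1, hLL' hs.2.2⟩) _ _ h.2.2⟩

end ReachIn

theorem reachIn_of_hexAdj_succ {L : Set Hexa} {f : ℤ → Hexa}
    (hadj : ∀ n, HexAdj (f n) (f (n + 1))) (hL : ∀ n, f n ∈ L) (m n : ℤ) :
    ReachIn L (f m) (f n) := by
  wlog hmn : m ≤ n generalizing m n
  · exact (this n m (le_of_not_ge hmn)).symm
  induction n, hmn using Int.leInduction with
  | base => exact .refl (hL m)
  | succ n _ ih => exact ih.trans (.of_hexAdj (hadj n) (hL n) (hL (n + 1)))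

theorem reachIn_row {L : Set Hexa} {y : ℤ} (hrow : ∀ t, (t, y) ∈ L) (a b : ℤ) :
    ReachIn L (a, y) (b, y) :=
  reachIn_of_hexAdj_succ (f := fun t => (t, y)) (fun n => by simp [HexAdj]) hrow a b

theorem reachIn_column {L : Set Hexa} {x : ℤ} (hcol : ∀ t, (x, t) ∈ L) (a b : ℤ) :
    ReachIn L (x, a) (x, b) :=
  reachIn_of_hexAdj_succ (f := fun t => (x, t)) (fun n => by simp [HexAdj]) hcol a b

theorem reachIn_univ (a b : Hexa) : ReachIn Set.univ a b :=
  (reachIn_row (fun _ => Set.mem_univ _) a.1 b.1).trans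
    (reachIn_column (fun _ => Set.mem_univ _) a.2 b.2)

def hexBox (N : ℤ) : Set Hexa := {p | |p.1| ≤ N ∧ |p.2| ≤ N}

theorem hexBox_finite (N : ℤ) : (hexBox N).Finite := by
  refine ((Set.finite_Icc (-N) N).prod (Set.finite_Icc (-N) N)).subset fun p hp => ?_
  exact ⟨abs_le.mp hp.1, abs_le.mp hp.2⟩

theorem Set.Finite.exists_subset_hexBox {K : Set Hexa} (hK : K.Finite) : ∃ N, K ⊆ hexBox N := by
  obtain ⟨N, hN⟩ := (hK.image fun p => max |p.1| |p.2|).bddAbove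
  exact ⟨N, fun p hp => max_le_iff.mp (hN ⟨p, hp, rfl⟩)⟩

theorem isConnectedSys_compl_hexBox (N : ℤ) : IsConnectedSys (hexBox N)ᶜ := by
  have hrow : ∀ y, N < |y| → ∀ t, (t, y) ∈ (hexBox N)ᶜ := fun y hy t h => by
    simp only [hexBox, Set.mem_ofPred_eq] at h; omega
  have hcol : ∀ x, N < |x| → ∀ t, (x, t) ∈ (hexBox N)ᶜ := fun x hx t h => by
    simp only [hexBox, Set.mem_ofPred_eq] at h; omega
  have hN : N < |N + 1| := (lt_add_one N).trans_le (le_abs_self _)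
  have to_corner : ∀ p ∈ (hexBox N)ᶜ, ReachIn (hexBox N)ᶜ p (N + 1, N + 1) := by
    rintro ⟨x, y⟩ hp
    simp only [hexBox, Set.mem_compl_iff, Set.mem_ofPred_eq, not_and_or, not_le] at hp
    rcases hp with hx | hy
    · exact (reachIn_column (hcol x hx) y (N + 1)).trans (reachIn_row (hrow _ hN) x (N + 1))
    · exact (reachIn_row (hrow y hy) x (N + 1)).trans (reachIn_column (hcol _ hN) y (N + 1))
  exact fun a ha b hb => (to_corner a ha).trans (to_corner b hb).symm

namespace IsComponent

variable {K L C : Set Hexa}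

theorem subset (hC : IsComponent L C) : C ⊆ L := by
  obtain ⟨a, _, rfl⟩ := hC
  exact fun b hb => hb.2.1

theorem nonempty (hC : IsComponent L C) : C.Nonempty := by
  obtain ⟨a, ha, rfl⟩ := hC
  exact ⟨a, .refl ha⟩

theorem subset_compl (hC : IsComponent Kᶜ C) : K ⊆ Cᶜ :=
  fun _ hk hkC => hC.subset hkC hk

theorem mem_of_reachIn (hC : IsComponent L C) {x y : Hexa} (hx : x ∈ C) (h : ReachIn L x y) :
    y ∈ C := by
  obtain ⟨a, _, rfl⟩ := hC
  exact hx.trans h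

theorem isConnectedSys (hC : IsComponent L C) : IsConnectedSys C := by
  obtain ⟨a, ha, rfl⟩ := hC
  have stays : ∀ b, ReachIn L a b → ReachIn {p | ReachIn L a p} a b := by
    rintro b ⟨-, -, hpath⟩
    induction hpath with
    | refl => exact .refl (.refl ha)
    | tail hab hstep ih =>
      exact ih.trans (.of_hexAdj hstep.1 ih.2.1 ⟨ha, hstep.2.2, hab.tail hstep⟩)
  exact fun b hb c hc => (stays b hb).symm.trans (stays c hc)

theorem exists_reachIn_compl_mem_or_reachIn_compl (hC : IsComponent Kᶜ C) {x : Hexa}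
    (hx : x ∈ Cᶜ) (y : Hexa) : (∃ k ∈ K, ReachIn Cᶜ x k) ∨ ReachIn Cᶜ x y := by
  obtain ⟨-, -, hpath⟩ := reachIn_univ x y
  induction hpath with
  | refl => exact .inr (.refl hx)
  | @tail z w _ hstep ih =>
    rcases ih with hK | hxz
    · exact .inl hK
    by_cases hzK : z ∈ K
    · exact .inl ⟨z, hzK, hxz⟩
    have hwC : w ∉ C := fun hwC => by
      by_cases hwK : w ∈ K
      · exact hC.subset hwC hwK
      · exact hxz.2.1 (hC.mem_of_reachIn hwC (.of_hexAdj hstep.1.symm hwK hzK))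
    exact .inr (hxz.trans (.of_hexAdj hstep.1 hxz.2.1 hwC))

theorem isConnectedSys_compl (hK : IsConnectedSys K) (hC : IsComponent Kᶜ C) :
    IsConnectedSys Cᶜ := by
  intro x hx y hy
  rcases hC.exists_reachIn_compl_mem_or_reachIn_compl hx y with ⟨k, hk, hxk⟩ | hxy
  · rcases hC.exists_reachIn_compl_mem_or_reachIn_compl hy x with ⟨k', hk', hyk'⟩ | hyx
    · exact hxk.trans (((hK k hk k' hk').mono hC.subset_compl).trans hyk'.symm)
    · exact hyx.symm
  · exact hxy

theorem compl_finite (hK : K.Finite) (hC : IsComponent Kᶜ C) (hinf : C.Infinite) :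
    Cᶜ.Finite := by
  obtain ⟨N, hKN⟩ := hK.exists_subset_hexBox
  obtain ⟨c, hcC, hcN⟩ := Set.not_subset.mp fun h => hinf ((hexBox_finite N).subset h)
  have houter : (hexBox N)ᶜ ⊆ C := fun p hp =>
    hC.mem_of_reachIn hcC ((isConnectedSys_compl_hexBox N c hcN p hp).mono
      (Set.compl_subset_compl.mpr hKN))
  exact (hexBox_finite N).subset (Set.compl_subset_comm.mp houter)

end IsComponent

/-- every finite component of the complement of a coronoid is a benzenoid,
and the complement of the (unique) infinite component is a benzenoid. -/
theorem stmt7 (K : Set Hexa) (hK : IsCoronoid K) :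
    (∀ C, IsComponent Kᶜ C → C.Finite → IsBenzenoid C) ∧
    (∀ C, IsComponent Kᶜ C → C.Infinite → IsBenzenoid Cᶜ) := by
  obtain ⟨hKfin, ⟨k, hk⟩, hKconn⟩ := hK
  refine ⟨fun C hC hCfin => ?_, fun C hC hCinf => ?_⟩
  · exact ⟨⟨hCfin, hC.nonempty, hC.isConnectedSys⟩, hC.isConnectedSys_compl hKconn⟩
  · refine ⟨⟨hC.compl_finite hKfin hCinf, ⟨k, hC.subset_compl hk⟩,
      hC.isConnectedSys_compl hKconn⟩, ?_⟩
    rw [compl_compl]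
    exact hC.isConnectedSys
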